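/- Let t > 1 be odd and let G = ℤ_t × ℤ_2 × ℤ_2, with elements indexed by ι : {1,…,4t} → G, ι(k) = (⌊(k−1)/4⌋ mod t, ⌊((k−1) mod 4)/2⌋ mod 2, (k−1) mod 2). For integers s, c with 5 ≤ s ≤ 2t+2 and 1 ≤ c ≤ 4t, define j(s,c) := 1 + 4·[⌊(s−1)/4⌋ + ⌊(c−1)/4⌋]_t + 2·[⌊((s−1) mod 4)/2⌋ + ⌊((c−1) mod 4)/2⌋]_2 + [s+c]_2, where [n]_m denotes n mod m. Then the two generalized coboundary matrices with entry −1 at position (ι(s), ι(c)) are exactly M̄_{ι(c)} and M̄_{ι(j(s,c))}; that is, 1 ≤ j(s,c) ≤ 4t and {d ∈ G : M̄_d(ι(s), ι(c)) = −1} = {ι(c), ι(j(s,c))}. -/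

import Mathlib

/-- The characteristic map `δ_d` (for the additive group `ℤ_t × ℤ_2 × ℤ_2`). -/
def charMap {A : Type*} [DecidableEq A] (d x : A) : ℤ := if x = d then -1 else 1

/-- The elementary coboundary `∂_d` over an additive group. -/
def elemCob {A : Type*} [AddGroup A] [DecidableEq A] (d g h : A) : ℤ :=
  charMap d g * charMap d h * charMap d (g + h)

/-- The generalized coboundary matrix `M̄_d`: the matrix of `∂_d` with row `d` negated. -/
def genCob {A : Type*} [AddGroup A] [DecidableEq A] (d g h : A) : ℤ :=
  if g = d then -(elemCob d g h) else elemCob d g h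

/-- The indexing `ι : {1,…,4t} → ℤ_t × ℤ_2 × ℤ_2` of the paper. -/
def iota (t : ℕ) (k : ℕ) : ZMod t × ZMod 2 × ZMod 2 :=
  ((((k - 1) / 4 : ℕ) : ZMod t), ((((k - 1) % 4) / 2 : ℕ) : ZMod 2), (((k - 1) % 2 : ℕ) : ZMod 2))

/-- The index function `j(s,c)`. -/
def jIdx (t s c : ℕ) : ℕ :=
  1 + 4 * (((s - 1) / 4 + (c - 1) / 4) % t)
    + 2 * ((((s - 1) % 4) / 2 + ((c - 1) % 4) / 2) % 2)
    + (s + c) % 2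

/-! `M̄_d(g, h) = -1` holds exactly when one but not both of `h = d`, `g + h = d` holds, so for
`g ≠ 0` the matrices with a `-1` at `(g, h)` are `M̄_h` and `M̄_{g+h}`. The index `j(s, c)` is built
digitwise so that `ι(j(s, c)) = ι(s) + ι(c)`, and `s ≥ 5` makes the `ℤ_t`-coordinate of `ι(s)` nonzero. -/

lemma genCob_eq_neg_one_iff {A : Type*} [AddGroup A] [DecidableEq A] (d g h : A) :
    genCob d g h = -1 ↔ (h = d ↔ g + h ≠ d) := by
  unfold genCob elemCob charMap
  split_ifs <;> simp_all

lemma setOf_genCob_eq_neg_one {A : Type*} [AddGroup A] [DecidableEq A] {g : A} (hg : g ≠ 0)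
    (h : A) : {d | genCob d g h = -1} = {h, g + h} := by
  have hne : h ≠ g + h := fun e => hg (add_eq_right.mp e.symm)
  ext d
  simp only [Set.mem_ofPred_eq, genCob_eq_neg_one_iff, Set.mem_insert_iff, Set.mem_singleton_iff]
  grind

lemma one_le_jIdx (t s c : ℕ) : 1 ≤ jIdx t s c := by
  unfold jIdx; omega

lemma jIdx_le (t s c : ℕ) (ht : 0 < t) : jIdx t s c ≤ 4 * t := by
  have hA := Nat.mod_lt ((s - 1) / 4 + (c - 1) / 4) ht
  have hB := Nat.mod_lt (((s - 1) % 4) / 2 + ((c - 1) % 4) / 2) two_pos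
  have hE := Nat.mod_lt (s + c) two_pos
  unfold jIdx; omega

lemma iota_jIdx (t s c : ℕ) (hs : 1 ≤ s) (hc : 1 ≤ c) :
    iota t (jIdx t s c) = iota t s + iota t c := by
  set A := ((s - 1) / 4 + (c - 1) / 4) % t
  set B := (((s - 1) % 4) / 2 + ((c - 1) % 4) / 2) % 2
  set E := (s + c) % 2
  have hB : B < 2 := Nat.mod_lt _ two_pos
  have hE : E < 2 := Nat.mod_lt _ two_pos
  have hj : jIdx t s c - 1 = 4 * A + 2 * B + E := by unfold jIdx; omega
  have hA' : (jIdx t s c - 1) / 4 = A := by omega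
  have hB' : ((jIdx t s c - 1) % 4) / 2 = B := by omega
  have hE' : (jIdx t s c - 1) % 2 = E := by omega
  simp only [iota, hA', hB', hE', Prod.mk_add_mk, ← Nat.cast_add, Prod.mk.injEq,
    ZMod.natCast_eq_natCast_iff]
  refine ⟨Nat.mod_modEq _ t, Nat.mod_modEq _ 2, ?_⟩
  unfold Nat.ModEq
  omega

lemma iota_ne_zero (t s : ℕ) (hs1 : 5 ≤ s) (hs2 : s ≤ 4 * t) : iota t s ≠ 0 := by
  intro h
  have hfst : (((s - 1) / 4 : ℕ) : ZMod t) = 0 := congrArg Prod.fst h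
  rw [ZMod.natCast_eq_zero_iff] at hfst
  have := Nat.le_of_dvd (by omega) hfst
  omega

theorem genCob_negative_at_position_Z_general (t : ℕ)
    (s c : ℕ) (hs1 : 5 ≤ s) (hs2 : s ≤ 2 * t + 2) (hc1 : 1 ≤ c) :
    1 ≤ jIdx t s c ∧ jIdx t s c ≤ 4 * t ∧
      {d : ZMod t × ZMod 2 × ZMod 2 | genCob d (iota t s) (iota t c) = -1} =
        {iota t c, iota t (jIdx t s c)} := by
  have ht : 2 ≤ t := by omega
  refine ⟨one_le_jIdx t s c, jIdx_le t s c (by omega), ?_⟩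
  rw [iota_jIdx t s c (by omega) hc1]
  exact setOf_genCob_eq_neg_one (iota_ne_zero t s hs1 (by omega)) _

/-- for `5 ≤ s ≤ 2t+2` and `1 ≤ c ≤ 4t`, the two generalized coboundary
matrices with entry `-1` at position `(ι(s), ι(c))` are exactly `M̄_{ι(c)}` and
`M̄_{ι(j(s,c))}`. -/
theorem genCob_negative_at_position_Z (t : ℕ) (ht : 1 < t) (htodd : Odd t)
    (s c : ℕ) (hs1 : 5 ≤ s) (hs2 : s ≤ 2 * t + 2) (hc1 : 1 ≤ c) (hc2 : c ≤ 4 * t) :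
    1 ≤ jIdx t s c ∧ jIdx t s c ≤ 4 * t ∧
      {d : ZMod t × ZMod 2 × ZMod 2 | genCob d (iota t s) (iota t c) = -1} =
        {iota t c, iota t (jIdx t s c)} :=
  genCob_negative_at_position_Z_general t s c hs1 hs2 hc1
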